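/- arXiv:2012.13075 — 3 statements merged into one kernel-verified Lean document; each statement's English description precedes it below -/
import Mathlib

section
/- Let p ≥ 1 and let A be a p×p real matrix. The real vector space Sym_p of symmetric p×p real matrices (matrices X with Xᵀ = X) is invariant under the map X ↦ A X Aᵀ, and the determinant of the induced linear endomorphism of Sym_p equals (det A)^{p+1}. -/
/-!
`A ↦ det (X ↦ A X Aᵀ on Sym_p)` is multiplicative, so by Gaussian elimination it suffices to
evaluate it on diagonal matrices and on transvections. For `A = diag d` the coordinates `X i j`,
`i ≤ j`, of `Sym_p` diagonalise the map, with eigenvalues `d i * d j` whose product is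
`(∏ d) ^ (p + 1)`. A transvection `T` is sent to `1`: the value `x` at `T` is a unit, and
conjugating `T` by a diagonal matrix doubles its off-diagonal entry, so `x = x ^ 2`.
-/

open Matrix

def symMatrixSubmodule (p : ℕ) : Submodule ℝ (Matrix (Fin p) (Fin p) ℝ) where
  carrier := {X | Xᵀ = X}
  add_mem' := by
    intro X Y hX hY
    simp only [Set.mem_setOf_eq] at *
    rw [Matrix.transpose_add, hX, hY]
  zero_mem' := by simp
  smul_mem' := by
    intro c X hX
    simp only [Set.mem_setOf_eq] at *
    rw [Matrix.transpose_smul, hX]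

def congrByLinear (p : ℕ) (A : Matrix (Fin p) (Fin p) ℝ) :
    Matrix (Fin p) (Fin p) ℝ →ₗ[ℝ] Matrix (Fin p) (Fin p) ℝ where
  toFun X := A * X * Aᵀ
  map_add' X Y := by simp [Matrix.mul_add, Matrix.add_mul]
  map_smul' c X := by simp [Matrix.mul_smul, Matrix.smul_mul]

open Finset in
theorem card_filter_le_add_card_filter_ge {n : Type*} [Fintype n] [LinearOrder n] (i : n) :
    #{j | i ≤ j} + #{j | j ≤ i} = Fintype.card n + 1 := by
  have hlt : #{j | j ≤ i} = #{j | j < i} + 1 := by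
    rw [← card_insert_of_notMem (s := {j | j < i}) (a := i) (by simp)]
    congr 1
    ext j
    simp [le_iff_lt_or_eq, or_comm]
  simp only [hlt, ← not_le]
  rw [← add_assoc, card_filter_add_card_filter_not, card_univ]

open Finset in
theorem prod_le_pairs_mul_eq_pow {n M : Type*} [Fintype n] [LinearOrder n] [CommMonoid M]
    (d : n → M) :
    ∏ ij : {ij : n × n // ij.1 ≤ ij.2}, d ij.1.1 * d ij.1.2 =
      (∏ i, d i) ^ (Fintype.card n + 1) := by
  have hrow : ∀ i, ∏ j with i ≤ j, d i = d i ^ #{j | i ≤ j} := fun i => prod_const _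
  have hcol : ∀ j, ∏ i with i ≤ j, d j = d j ^ #{i | i ≤ j} := fun j => prod_const _
  calc ∏ ij : {ij : n × n // ij.1 ≤ ij.2}, d ij.1.1 * d ij.1.2
      = ∏ ij : n × n with ij.1 ≤ ij.2, d ij.1 * d ij.2 :=
        (prod_subtype _ (by simp) fun ij : n × n => d ij.1 * d ij.2).symm
    _ = (∏ i, ∏ j with i ≤ j, d i) * ∏ j, ∏ i with i ≤ j, d j := by
        rw [prod_mul_distrib, prod_filter, prod_filter, Fintype.prod_prod_type,
          Fintype.prod_prod_type, prod_comm (f := fun i j => if i ≤ j then d j else 1)]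
        simp only [prod_filter]
    _ = ∏ i, d i ^ (#{j | i ≤ j} + #{j | j ≤ i}) := by
        simp only [hrow, hcol, ← prod_mul_distrib, pow_add]
    _ = (∏ i, d i) ^ (Fintype.card n + 1) := by
        simp only [card_filter_le_add_card_filter_ge, prod_pow]

section Transvection

variable {n K : Type*} [Fintype n] [DecidableEq n] [Field K]

theorem diagonal_mulSingle_mul_diagonal_mulSingle_inv (i : n) {a : K} (ha : a ≠ 0) :
    diagonal (Pi.mulSingle i a) * diagonal (Pi.mulSingle i a⁻¹) = 1 := by
  rw [diagonal_mul_diagonal, ← diagonal_one]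
  congr 1
  ext k
  by_cases hk : k = i <;> simp [hk, ha]

theorem diagonal_mulSingle_mul_transvection_mul_diagonal_mulSingle_inv {i j : n} (hij : i ≠ j)
    {a : K} (ha : a ≠ 0) (c : K) :
    diagonal (Pi.mulSingle i a) * transvection i j c * diagonal (Pi.mulSingle i a⁻¹) =
      transvection i j (a * c) := by
  ext k l
  rw [mul_diagonal, diagonal_mul]
  by_cases hk : k = i <;> by_cases hl : l = i <;> by_cases hkl : k = l <;>
    by_cases hlj : l = j <;>
    simp_all [transvection, single, one_apply, Pi.mulSingle_apply, eq_comm]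

theorem MonoidHom.map_transvection_eq_one {M : Type*} [CommMonoid M] (h2 : (2 : K) ≠ 0)
    (φ : Matrix n n K →* M) {i j : n} (hij : i ≠ j) (c : K) :
    φ (transvection i j c) = 1 := by
  set x := φ (transvection i j c)
  have hinv : x * φ (transvection i j (-c)) = 1 := by
    rw [← map_mul, transvection_mul_transvection_same _ _ hij, add_neg_cancel,
      transvection_zero, map_one]
  have hdiag : φ (diagonal (Pi.mulSingle i 2)) * φ (diagonal (Pi.mulSingle i 2⁻¹)) = 1 := by
    rw [← map_mul, diagonal_mulSingle_mul_diagonal_mulSingle_inv i h2, map_one]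
  have hsq : x * x = x := calc
    x * x = φ (transvection i j (2 * c)) := by
      rw [← map_mul, transvection_mul_transvection_same _ _ hij, two_mul]
    _ = φ (diagonal (Pi.mulSingle i 2)) * x * φ (diagonal (Pi.mulSingle i 2⁻¹)) := by
      rw [← diagonal_mulSingle_mul_transvection_mul_diagonal_mulSingle_inv hij h2, map_mul,
        map_mul]
    _ = x := by rw [mul_right_comm, hdiag, one_mul]
  calc x = x * x * φ (transvection i j (-c)) := by rw [mul_assoc, hinv, mul_one]
    _ = 1 := by rw [hsq, hinv]

end Transvection

theorem congrByLinear_mem_symMatrixSubmodule (p : ℕ) (A : Matrix (Fin p) (Fin p) ℝ) :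
    ∀ X ∈ symMatrixSubmodule p, congrByLinear p A X ∈ symMatrixSubmodule p := by
  intro X (hX : Xᵀ = X)
  change (A * X * Aᵀ)ᵀ = A * X * Aᵀ
  rw [transpose_mul, transpose_mul, transpose_transpose, hX, Matrix.mul_assoc]

noncomputable def symCongr (p : ℕ) :
    Matrix (Fin p) (Fin p) ℝ →* Module.End ℝ (symMatrixSubmodule p) where
  toFun A := (congrByLinear p A).restrict (congrByLinear_mem_symMatrixSubmodule p A)
  map_one' := by ext; simp [congrByLinear]
  map_mul' A B := by ext; simp [congrByLinear, Matrix.mul_assoc]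

noncomputable def symMatrixEquivUpper (p : ℕ) :
    symMatrixSubmodule p ≃ₗ[ℝ] ({ij : Fin p × Fin p // ij.1 ≤ ij.2} → ℝ) where
  toFun X s := (X : Matrix (Fin p) (Fin p) ℝ) s.1.1 s.1.2
  map_add' _ _ := rfl
  map_smul' _ _ := rfl
  invFun v := ⟨of fun i j => v ⟨(min i j, max i j), min_le_max⟩, by
    ext i j
    simp [min_comm, max_comm]⟩
  left_inv X := by
    have hX : (X : Matrix (Fin p) (Fin p) ℝ)ᵀ = X := X.2
    ext i j
    rcases le_total i j with h | h
    · simp [h]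
    · simpa [h] using congrFun (congrFun hX i) j
  right_inv v := by
    ext ⟨⟨i, j⟩, h⟩
    simp [h]

theorem symMatrixEquivUpper_symCongr_diagonal {p : ℕ} (d : Fin p → ℝ)
    (X : symMatrixSubmodule p) (s : {ij : Fin p × Fin p // ij.1 ≤ ij.2}) :
    symMatrixEquivUpper p (symCongr p (diagonal d) X) s =
      d s.1.1 * d s.1.2 * symMatrixEquivUpper p X s := by
  change (diagonal d * (X : Matrix (Fin p) (Fin p) ℝ) * (diagonal d)ᵀ) s.1.1 s.1.2 =
    d s.1.1 * d s.1.2 * (X : Matrix (Fin p) (Fin p) ℝ) s.1.1 s.1.2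
  rw [diagonal_transpose, mul_diagonal, diagonal_mul]
  ring

theorem det_symCongr_diagonal {p : ℕ} (d : Fin p → ℝ) :
    LinearMap.det (symCongr p (diagonal d)) = (∏ i, d i) ^ (p + 1) := by
  set e := symMatrixEquivUpper p
  have hconj : (e : symMatrixSubmodule p →ₗ[ℝ] _) ∘ₗ symCongr p (diagonal d) ∘ₗ
      (e.symm : _ →ₗ[ℝ] symMatrixSubmodule p) =
        toLin' (diagonal fun s : {ij : Fin p × Fin p // ij.1 ≤ ij.2} => d s.1.1 * d s.1.2) := by
    refine LinearMap.ext fun v => funext fun s => ?_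
    simp [e, symMatrixEquivUpper_symCongr_diagonal, mulVec_diagonal]
  rw [← LinearMap.det_conj _ e, hconj, LinearMap.det_toLin', det_diagonal,
    prod_le_pairs_mul_eq_pow, Fintype.card_fin]

theorem det_symCongr_transvection {p : ℕ} {i j : Fin p} (hij : i ≠ j) (c : ℝ) :
    LinearMap.det (symCongr p (transvection i j c)) = 1 :=
  (LinearMap.det.comp (symCongr p)).map_transvection_eq_one two_ne_zero hij c

theorem det_congr_restrict_symMatrix_general (p : ℕ) (A : Matrix (Fin p) (Fin p) ℝ) :
    ∃ hinv : ∀ X ∈ symMatrixSubmodule p, congrByLinear p A X ∈ symMatrixSubmodule p,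
      LinearMap.det ((congrByLinear p A).restrict hinv) = A.det ^ (p + 1) := by
  refine ⟨congrByLinear_mem_symMatrixSubmodule p A, ?_⟩
  change LinearMap.det (symCongr p A) = A.det ^ (p + 1)
  refine diagonal_transvection_induction (fun M => LinearMap.det (symCongr p M) = M.det ^ (p + 1))
    A (fun d _ => ?_) (fun ⟨i, j, hij, c⟩ => ?_) (fun M N hM hN => ?_)
  · rw [det_symCongr_diagonal, det_diagonal]
  · rw [TransvectionStruct.toMatrix_mk, det_symCongr_transvection hij,
      det_transvection_of_ne _ _ hij, one_pow]
  · rw [map_mul, map_mul, hM, hN, det_mul, mul_pow]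

/-- The space of symmetric `p × p` real matrices is invariant under the congruence map
`X ↦ A X Aᵀ`, and the determinant of the induced linear endomorphism of this space is
`(det A)^(p+1)`. -/
theorem det_congr_restrict_symMatrix (p : ℕ) (hp : 1 ≤ p) (A : Matrix (Fin p) (Fin p) ℝ) :
    ∃ hinv : ∀ X ∈ symMatrixSubmodule p, congrByLinear p A X ∈ symMatrixSubmodule p,
      LinearMap.det ((congrByLinear p A).restrict hinv) = A.det ^ (p + 1) :=
  det_congr_restrict_symMatrix_general p A
end

section
/- Generic ascent property of the EM algorithm: let (𝒵, 𝒜, ν) be a σ-finite measure space and let f₁, f₂ : 𝒵 → ℝ be measurable with f₁ ≥ 0 and f₂ ≥ 0, set L₁ = ∫ f₁ dν and L₂ = ∫ f₂ dν, and assume 0 < L₁ < ∞, 0 < L₂ < ∞, that f₁ > 0 and f₂ > 0 hold ν-almost everywhere, and that the functions z ↦ (f₁(z)/L₁)·log f₁(z) and z ↦ (f₁(z)/L₁)·log f₂(z) are ν-integrable. Define Q(f | f₁) = ∫ (f₁(z)/L₁)·log f(z) dν(z). If Q(f₂ | f₁) ≥ Q(f₁ | f₁), then L₂ ≥ L₁.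 -/
/-!
Since `log t ≤ t - 1`, pointwise `f₁ (log f₂ - log f₁) ≤ f₂ - f₁`. Integrating, `L₁ (Q(f₂ | f₁) - Q(f₁ | f₁))`
is at most `L₂ - L₁`, and the left side is nonnegative by hypothesis.
-/

open MeasureTheory Real

lemma Real.mul_log_sub_log_le_sub {x y : ℝ} (hx : 0 ≤ x) (hy : 0 < y) :
    x * (log y - log x) ≤ y - x := by
  rcases hx.eq_or_lt with rfl | hx
  · simpa using hy.le
  calc x * (log y - log x) = x * log (y / x) := by rw [log_div hy.ne' hx.ne']
    _ ≤ x * (y / x - 1) := by gcongr; exact log_le_sub_one_of_pos (div_pos hy hx)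
    _ = y - x := by field_simp

lemma MeasureTheory.integral_mul_log_sub_log_le {α : Type*} [MeasurableSpace α] {μ : Measure α}
    {f g : α → ℝ} (hf : 0 ≤ᵐ[μ] f) (hg : ∀ᵐ z ∂μ, 0 < g z)
    (hfi : Integrable f μ) (hgi : Integrable g μ)
    (hfg : Integrable (fun z => f z * (log (g z) - log (f z))) μ) :
    ∫ z, f z * (log (g z) - log (f z)) ∂μ ≤ ∫ z, g z ∂μ - ∫ z, f z ∂μ := by
  rw [← integral_sub hgi hfi]
  refine integral_mono_ae hfg (hgi.sub hfi) ?_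
  filter_upwards [hf, hg] with z hfz hgz
  exact mul_log_sub_log_le_sub hfz hgz

theorem em_ascent_general {Z : Type*} [MeasurableSpace Z] (ν : Measure Z)
    (f₁ f₂ : Z → ℝ)
    (hnn₁ : ∀ z, 0 ≤ f₁ z)
    (hint₁ : Integrable f₁ ν) (hint₂ : Integrable f₂ ν)
    (hL₁ : 0 < ∫ z, f₁ z ∂ν)
    (hpos₂ : ∀ᵐ z ∂ν, 0 < f₂ z)
    (hQ₁ : Integrable (fun z => f₁ z / (∫ z', f₁ z' ∂ν) * Real.log (f₁ z)) ν)
    (hQ₂ : Integrable (fun z => f₁ z / (∫ z', f₁ z' ∂ν) * Real.log (f₂ z)) ν)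
    (hQ : ∫ z, f₁ z / (∫ z', f₁ z' ∂ν) * Real.log (f₁ z) ∂ν
        ≤ ∫ z, f₁ z / (∫ z', f₁ z' ∂ν) * Real.log (f₂ z) ∂ν) :
    ∫ z, f₁ z ∂ν ≤ ∫ z, f₂ z ∂ν := by
  set L₁ := ∫ z, f₁ z ∂ν
  set h := fun z => f₁ z * (log (f₂ z) - log (f₁ z))
  have hQ_sub : (fun z => f₁ z / L₁ * log (f₂ z) - f₁ z / L₁ * log (f₁ z))
      = fun z => L₁⁻¹ * h z := by
    ext z; simp only [h]; ring
  have hh : Integrable h ν := by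
    rw [← integrable_const_mul_iff (isUnit_iff_ne_zero.mpr (inv_ne_zero hL₁.ne')), ← hQ_sub]
    exact hQ₂.sub hQ₁
  have hh_nonneg : 0 ≤ ∫ z, h z ∂ν := by
    have h_gap : L₁⁻¹ * ∫ z, h z ∂ν = (∫ z, f₁ z / L₁ * log (f₂ z) ∂ν)
        - ∫ z, f₁ z / L₁ * log (f₁ z) ∂ν := by
      rw [← integral_const_mul, ← integral_sub hQ₂ hQ₁, hQ_sub]
    exact nonneg_of_mul_nonneg_right (h_gap ▸ sub_nonneg.mpr hQ) (inv_pos.mpr hL₁)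
  linarith [integral_mul_log_sub_log_le (.of_forall hnn₁) hpos₂ hint₁ hint₂ hh]

/-- Generic ascent property of the EM algorithm: if `f₁, f₂ ≥ 0` are measurable with
integrals `L₁ = ∫ f₁ dν` and `L₂ = ∫ f₂ dν` positive and finite, `f₁, f₂ > 0` a.e., and the
EM objective `Q(f | f₁) = ∫ (f₁/L₁) log f dν` (with both integrands integrable) satisfies
`Q(f₂ | f₁) ≥ Q(f₁ | f₁)`, then `L₂ ≥ L₁`. -/
theorem em_ascent {Z : Type*} [MeasurableSpace Z] (ν : Measure Z) [SigmaFinite ν]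
    (f₁ f₂ : Z → ℝ) (hm₁ : Measurable f₁) (hm₂ : Measurable f₂)
    (hnn₁ : ∀ z, 0 ≤ f₁ z) (hnn₂ : ∀ z, 0 ≤ f₂ z)
    (hint₁ : Integrable f₁ ν) (hint₂ : Integrable f₂ ν)
    (hL₁ : 0 < ∫ z, f₁ z ∂ν) (hL₂ : 0 < ∫ z, f₂ z ∂ν)
    (hpos₁ : ∀ᵐ z ∂ν, 0 < f₁ z) (hpos₂ : ∀ᵐ z ∂ν, 0 < f₂ z)
    (hQ₁ : Integrable (fun z => f₁ z / (∫ z', f₁ z' ∂ν) * Real.log (f₁ z)) ν)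
    (hQ₂ : Integrable (fun z => f₁ z / (∫ z', f₁ z' ∂ν) * Real.log (f₂ z)) ν)
    (hQ : ∫ z, f₁ z / (∫ z', f₁ z' ∂ν) * Real.log (f₁ z) ∂ν
        ≤ ∫ z, f₁ z / (∫ z', f₁ z' ∂ν) * Real.log (f₂ z) ∂ν) :
    ∫ z, f₁ z ∂ν ≤ ∫ z, f₂ z ∂ν :=
  em_ascent_general ν f₁ f₂ hnn₁ hint₁ hint₂ hL₁ hpos₂ hQ₁ hQ₂ hQ
end

section
/- Let ρ ∈ (−1, 1) and let (X, Y) be a random vector on a standard Borel probability space whose joint law is the multivariate Gaussian on ℝ² with mean 0 and covariance [[1, ρ],[ρ, 1]]. Then the conditional distribution of X given Y is Gaussian with mean ρ·y and variance 1 − ρ²: for (law of Y)-almost every y, condDistrib X Y ℙ y = gaussianReal (ρ·y) (1 − ρ²). -/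
open MeasureTheory ProbabilityTheory Matrix

/-- The space of real matrices, equipped with the product measurable structure. -/
instance matrixMeasurableSpace {m n : Type*} : MeasurableSpace (Matrix m n ℝ) :=
  inferInstanceAs (MeasurableSpace (m → n → ℝ))

/-- Square root of a positive semidefinite matrix, as defined in the older Mathlib
(`Matrix.PosSemidef.sqrt`, removed since). -/
noncomputable def Matrix.PosSemidef.sqrt {n : Type*} [Fintype n] [DecidableEq n]
    {A : Matrix n n ℝ} (hA : A.PosSemidef) : Matrix n n ℝ :=
  (hA.1.eigenvectorUnitary : Matrix n n ℝ) * diagonal ((↑) ∘ (Real.sqrt ∘ hA.1.eigenvalues)) *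
    (star (hA.1.eigenvectorUnitary : Matrix n n ℝ))

/-- The multivariate Gaussian measure `N(μ, S)` on `EuclideanSpace ℝ ι` with mean `μ` and
(positive semidefinite) covariance matrix `S`: the pushforward of the standard Gaussian
product measure under `x ↦ μ + √S x`. -/
noncomputable def multivariateGaussian {ι : Type*} [Fintype ι] [DecidableEq ι]
    (μ : EuclideanSpace ℝ ι) (S : Matrix ι ι ℝ) (hS : S.PosSemidef) :
    Measure (EuclideanSpace ℝ ι) :=
  Measure.map (fun x => μ + Matrix.toEuclideanLin hS.sqrt x)
    (Measure.map (MeasurableEquiv.toLp 2 (ι → ℝ))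
      (Measure.pi fun _ : ι => gaussianReal 0 1))

/-- The parameterized Wishart distribution `W_p(S, M)`: the law of `(1/M) ∑_{j=1}^M Z_j Z_jᵀ`
where `Z_1, …, Z_M` are i.i.d. `N(0, S)` random vectors in `ℝ^p`, i.e. the pushforward of the
`M`-fold product of `N(0, S)` under `(z_1, …, z_M) ↦ (1/M) ∑_j z_j z_jᵀ`. -/
noncomputable def wishart (p M : ℕ) (S : Matrix (Fin p) (Fin p) ℝ) (hS : S.PosSemidef) :
    Measure (Matrix (Fin p) (Fin p) ℝ) :=
  Measure.map
    (fun z : Fin M → EuclideanSpace ℝ (Fin p) =>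
      (M : ℝ)⁻¹ • ∑ j : Fin M, Matrix.of (fun i k => z j i * z j k))
    (Measure.pi fun _ : Fin M => multivariateGaussian 0 S hS)

/-!
With `a` the regression coefficient, `cov(X, Y) = a Var(Y)`, the pair `(Y, X - a Y)` is a linear
image of a Gaussian vector with zero covariance, hence independent. So given `Y = y`, the
variable `X = a Y + (X - a Y)` is distributed as `a y + N(E[X - a Y], Var(X - a Y))`.
-/

open scoped MatrixOrder

lemma Matrix.PosSemidef.sqrt_eq_cfcSqrt {n : Type*} [Fintype n] [DecidableEq n]
    {A : Matrix n n ℝ} (hA : A.PosSemidef) : hA.sqrt = CFC.sqrt A := by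
  rw [CFC.sqrt_eq_cfc, cfc_nnreal_eq_real _ A, hA.1.cfc_eq, IsHermitian.cfc,
    Unitary.conjStarAlgAut_apply, Matrix.PosSemidef.sqrt]
  congr
  funext x
  rw [Real.sqrt]

lemma multivariateGaussian_eq_probabilityTheory_multivariateGaussian {ι : Type*} [Fintype ι]
    [DecidableEq ι] (μ : EuclideanSpace ℝ ι) {S : Matrix ι ι ℝ} (hS : S.PosSemidef) :
    multivariateGaussian μ S hS = ProbabilityTheory.multivariateGaussian μ S := by
  rw [_root_.multivariateGaussian, ProbabilityTheory.multivariateGaussian,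
    ← map_pi_eq_stdGaussian, hS.sqrt_eq_cfcSqrt]
  rfl

namespace ProbabilityTheory

variable {Ω : Type*} {mΩ : MeasurableSpace Ω} {P : Measure Ω}

lemma condDistrib_ae_eq_map_of_indepFun {β γ E : Type*} [IsProbabilityMeasure P]
    [MeasurableSpace β] [MeasurableSpace γ] [MeasurableSpace E] [StandardBorelSpace E]
    [Nonempty E] {Y : Ω → β} {V : Ω → γ} (hY : AEMeasurable Y P) (hV : AEMeasurable V P)
    (hYV : IndepFun Y V P) {f : β → γ → E} (hf : Measurable (Function.uncurry f)) :
    ∀ᵐ y ∂P.map Y, condDistrib (fun ω ↦ f (Y ω) (V ω)) Y P y = (P.map V).map (f y) := by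
  have hfy (y : β) : Measurable (f y) := hf.comp measurable_prodMk_left
  set κ : Kernel β E := (Kernel.id ×ₖ Kernel.const β (P.map V)).map (Function.uncurry f)
  have hκ (y : β) : κ y = (P.map V).map (f y) := by
    rw [Kernel.map_apply _ hf, Kernel.prod_apply, Kernel.id_apply, Kernel.const_apply,
      Measure.dirac_prod, Measure.map_map hf measurable_prodMk_left]
    rfl
  have hjoint : P.map (fun ω ↦ (Y ω, f (Y ω) (V ω))) = P.map Y ⊗ₘ κ := by
    have hg : Measurable fun p : β × γ ↦ (p.1, Function.uncurry f p) :=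
      measurable_fst.prodMk hf
    rw [show (fun ω ↦ (Y ω, f (Y ω) (V ω))) = (fun p : β × γ ↦ (p.1, Function.uncurry f p)) ∘
      (fun ω ↦ (Y ω, V ω)) from rfl, ← AEMeasurable.map_map_of_aemeasurable hg.aemeasurable
      (hY.prodMk hV), (indepFun_iff_map_prod_eq_prod_map_map hY hV).1 hYV]
    ext s hs
    rw [Measure.map_apply hg hs, Measure.prod_apply (hg hs), Measure.compProd_apply hs]
    refine lintegral_congr fun y ↦ ?_
    rw [hκ, Measure.map_apply (hfy y) (measurable_prodMk_left hs)]
    rfl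
  have hfYV : AEMeasurable (fun ω ↦ f (Y ω) (V ω)) P := hf.comp_aemeasurable (hY.prodMk hV)
  filter_upwards [condDistrib_ae_eq_of_measure_eq_compProd Y hfYV hjoint] with y hy
  rw [hy, hκ]

lemma HasGaussianLaw.condDistrib_ae_eq_gaussianReal [IsProbabilityMeasure P] {X Y : Ω → ℝ}
    (hXY : HasGaussianLaw (fun ω ↦ (X ω, Y ω)) P) {a : ℝ} (ha : cov[X, Y; P] = a * Var[Y; P]) :
    ∀ᵐ y ∂P.map Y, condDistrib X Y P y =
      gaussianReal (P[X] + a * (y - P[Y])) (Var[X; P] - a * cov[X, Y; P]).toNNReal := by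
  set V : Ω → ℝ := fun ω ↦ X ω - a * Y ω
  have hX : MemLp X 2 P := hXY.fst.memLp_two
  have hY : MemLp Y 2 P := hXY.snd.memLp_two
  have haY : MemLp (fun ω ↦ a * Y ω) 2 P := hY.const_mul a
  have hV : MemLp V 2 P := hX.sub haY
  have hYV : HasGaussianLaw (fun ω ↦ (Y ω, V ω)) P := by
    simpa using hXY.map_fun ((ContinuousLinearMap.snd ℝ ℝ ℝ).prod
      (ContinuousLinearMap.fst ℝ ℝ ℝ - a • ContinuousLinearMap.snd ℝ ℝ ℝ))
  have hcov : cov[Y, V; P] = 0 := by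
    rw [covariance_fun_sub_right hY hX haY, covariance_const_mul_right, covariance_comm, ha,
      covariance_self hY.aemeasurable]
    ring
  have hmean : P[V] = P[X] - a * P[Y] := by
    rw [integral_sub (hX.integrable one_le_two) (haY.integrable one_le_two), integral_const_mul]
  have hvar : Var[V; P] = Var[X; P] - a * cov[X, Y; P] := by
    rw [← covariance_self hV.aemeasurable, covariance_fun_sub_left hX haY hV,
      covariance_const_mul_left, hcov, covariance_fun_sub_right hX hX haY,
      covariance_self hX.aemeasurable, covariance_const_mul_right]
    ring
  have hXV : X = fun ω ↦ a * Y ω + V ω := by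
    funext ω
    ring
  filter_upwards [condDistrib_ae_eq_map_of_indepFun hY.aemeasurable hV.aemeasurable
    (hYV.indepFun_of_covariance_eq_zero hcov) (f := fun y v ↦ a * y + v) (by fun_prop)] with y hy
  rw [← hXV] at hy
  rw [hy, hYV.snd.map_eq_gaussianReal, hmean, hvar, gaussianReal_map_const_add]
  congr 1
  ring

section MultivariateGaussian

variable {ι : Type*} [Fintype ι] [DecidableEq ι] {μ : EuclideanSpace ℝ ι} {S : Matrix ι ι ℝ}
  {W : Ω → EuclideanSpace ℝ ι}

lemma integral_eval_of_map_eq_multivariateGaussian [IsProbabilityMeasure P]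
    (hW : P.map W = multivariateGaussian μ S) (i : ι) : P[fun ω ↦ W ω i] = μ i := by
  have hWm : AEMeasurable W P := .of_map_ne_zero (hW ▸ IsProbabilityMeasure.ne_zero _)
  calc P[fun ω ↦ W ω i]
      = ∫ x, x i ∂(P.map W) := (integral_map (f := fun x ↦ x i) hWm (by fun_prop)).symm
    _ = μ i := by
      rw [hW, ← EuclideanSpace.coe_proj,
        ContinuousLinearMap.integral_comp_id_comm IsGaussian.integrable_id]
      simp

lemma covariance_eval_of_map_eq_multivariateGaussian (hS : S.PosSemidef)
    (hW : P.map W = multivariateGaussian μ S) (i j : ι) :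
    cov[fun ω ↦ W ω i, fun ω ↦ W ω j; P] = S i j := by
  have hWm : AEMeasurable W P := .of_map_ne_zero (hW ▸ IsProbabilityMeasure.ne_zero _)
  rw [← covariance_eval_multivariateGaussian hS, ← hW,
    covariance_map_fun (X := fun x ↦ x i) (Y := fun x ↦ x j) (by fun_prop) (by fun_prop) hWm]

end MultivariateGaussian

end ProbabilityTheory

theorem condDistrib_bivariate_gaussian_general
    {Ω : Type*} [MeasurableSpace Ω]
    (P : Measure Ω) [IsProbabilityMeasure P]
    (ρ : ℝ)
    (hC : (!![1, ρ; ρ, 1] : Matrix (Fin 2) (Fin 2) ℝ).PosSemidef)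
    (W : Ω → EuclideanSpace ℝ (Fin 2))
    (hlaw : Measure.map W P = multivariateGaussian 0 !![1, ρ; ρ, 1] hC)
    (X Y : Ω → ℝ) (hX : X = fun ω => W ω 0) (hY : Y = fun ω => W ω 1) :
    ∀ᵐ y ∂(Measure.map Y P),
      condDistrib X Y P y = gaussianReal (ρ * y) (Real.toNNReal (1 - ρ ^ 2)) := by
  rw [multivariateGaussian_eq_probabilityTheory_multivariateGaussian] at hlaw
  subst hX hY
  have hW : HasGaussianLaw W P := ⟨hlaw ▸ inferInstance⟩
  have hXY : HasGaussianLaw (fun ω ↦ (W ω 0, W ω 1)) P :=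
    hW.map_fun ((EuclideanSpace.proj 0).prod (EuclideanSpace.proj 1))
  have hcov := covariance_eval_of_map_eq_multivariateGaussian hC hlaw
  have hmean := integral_eval_of_map_eq_multivariateGaussian hlaw
  have hVarY : Var[fun ω ↦ W ω 1; P] = 1 := by
    rw [← covariance_self (by fun_prop), hcov]
    simp
  filter_upwards [hXY.condDistrib_ae_eq_gaussianReal (a := ρ) (by simp [hcov, hVarY])] with y hy
  rw [hy, hmean, hmean, ← covariance_self (by fun_prop), hcov, hcov]
  simp [sq]

/-- For a centered bivariate Gaussian vector `(X, Y)` with covariance `[[1, ρ], [ρ, 1]]` on a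
standard Borel probability space, the conditional distribution of `X` given `Y` is Gaussian
with mean `ρ·y` and variance `1 − ρ²`: for `(law of Y)`-a.e. `y`,
`condDistrib X Y ℙ y = gaussianReal (ρ·y) (1 − ρ²)`. -/
theorem condDistrib_bivariate_gaussian
    {Ω : Type*} [MeasurableSpace Ω] [StandardBorelSpace Ω]
    (P : Measure Ω) [IsProbabilityMeasure P]
    (ρ : ℝ) (hρ : ρ ∈ Set.Ioo (-1 : ℝ) 1)
    (hC : (!![1, ρ; ρ, 1] : Matrix (Fin 2) (Fin 2) ℝ).PosSemidef)
    (W : Ω → EuclideanSpace ℝ (Fin 2)) (hW : Measurable W)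
    (hlaw : Measure.map W P = multivariateGaussian 0 !![1, ρ; ρ, 1] hC)
    (X Y : Ω → ℝ) (hX : X = fun ω => W ω 0) (hY : Y = fun ω => W ω 1) :
    ∀ᵐ y ∂(Measure.map Y P),
      condDistrib X Y P y = gaussianReal (ρ * y) (Real.toNNReal (1 - ρ ^ 2)) :=
  condDistrib_bivariate_gaussian_general P ρ hC W hlaw X Y hX hY
end
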